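/- arXiv:2204.08552 — 3 statements merged into one kernel-verified Lean document; each statement's English description precedes it below -/
import Mathlib

section
/- Let G be a k×n matrix over a finite field F_q generating a linear code C (i.e., C is the row space of G and G has rank k). Then det(GGᵀ) ≠ 0 if and only if C ∩ C⊥ = {0} (i.e., C is an LCD code). -/
open Matrix

/-- The Euclidean dual of a linear code `C ⊆ F^ι`:
all vectors orthogonal (w.r.t. the standard bilinear form) to every codeword. -/
def dualCode (F : Type*) [Field F] {ι : Type*} [Fintype ι]
    (C : Submodule F (ι → F)) : Submodule F (ι → F) where
  carrier := {v | ∀ c ∈ C, v ⬝ᵥ c = 0}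
  add_mem' := by
    intro a b ha hb c hc
    simp [add_dotProduct, ha c hc, hb c hc]
  zero_mem' := by intro c hc; simp
  smul_mem' := by
    intro r a ha c hc
    simp [smul_dotProduct, ha c hc]

/-- The row space of a matrix: the span of its rows. -/
def rowSpace (F : Type*) [Field F] {κ ι : Type*} (G : Matrix κ ι F) :
    Submodule F (ι → F) := Submodule.span F (Set.range fun k => G k)

/- For `v = x ᵥ* G` in the row space, orthogonality to every row of `G` says exactly
`(G Gᵀ) *ᵥ x = G *ᵥ v = 0`. So `C ∩ C⊥ = 0` means `x ↦ x ᵥ* G` kills the kernel of `G Gᵀ`; when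
the rows of `G` are independent that map is injective, and this becomes `ker (G Gᵀ) = 0`. -/

lemma mem_rowSpace_iff {F : Type*} [Field F] {κ ι : Type*} [Fintype κ]
    (G : Matrix κ ι F) (v : ι → F) :
    v ∈ rowSpace F G ↔ ∃ x : κ → F, x ᵥ* G = v := by
  rw [rowSpace, show (fun k => G k) = G.row from rfl, ← range_vecMulLinear]
  rfl

lemma mem_dualCode_rowSpace_iff {F : Type*} [Field F] {κ ι : Type*} [Fintype κ] [Fintype ι]
    (G : Matrix κ ι F) (v : ι → F) :
    v ∈ dualCode F (rowSpace F G) ↔ G *ᵥ v = 0 := by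
  have hdot : ∀ x : κ → F, v ⬝ᵥ (x ᵥ* G) = (G *ᵥ v) ⬝ᵥ x := fun x => by
    rw [dotProduct_comm, ← dotProduct_mulVec, dotProduct_comm]
  change (∀ c ∈ rowSpace F G, v ⬝ᵥ c = 0) ↔ _
  simp only [mem_rowSpace_iff, forall_exists_index, forall_apply_eq_imp_iff, hdot]
  exact dotProduct_eq_zero_iff

lemma rowSpace_inf_dualCode_eq_bot_iff {F : Type*} [Field F] {κ ι : Type*} [Fintype κ]
    [Fintype ι] (G : Matrix κ ι F) :
    rowSpace F G ⊓ dualCode F (rowSpace F G) = ⊥ ↔ ∀ x, (G * Gᵀ) *ᵥ x = 0 → x ᵥ* G = 0 := by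
  have hGGt : ∀ x, (G * Gᵀ) *ᵥ x = G *ᵥ (x ᵥ* G) := fun x => by
    rw [← mulVec_mulVec, mulVec_transpose]
  simp only [Submodule.eq_bot_iff, Submodule.mem_inf, mem_rowSpace_iff,
    mem_dualCode_rowSpace_iff, hGGt]
  constructor
  · exact fun h x hx => h _ ⟨⟨x, rfl⟩, hx⟩
  · rintro h _ ⟨⟨x, rfl⟩, hx⟩
    exact h x hx

lemma Matrix.linearIndependent_row_of_rank_eq_card {F : Type*} [Field F] {κ ι : Type*}
    [Fintype κ] [Fintype ι] {G : Matrix κ ι F} (hG : G.rank = Fintype.card κ) :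
    LinearIndependent F G.row := by
  rw [linearIndependent_iff_card_eq_finrank_span, ← hG, rank_eq_finrank_span_row]
  rfl

theorem stmt1_general (F : Type*) [Field F] {n k : ℕ}
    (G : Matrix (Fin k) (Fin n) F) (hG : G.rank = k)
    (C : Submodule F (Fin n → F)) (hC : C = rowSpace F G) :
    (G * Gᵀ).det ≠ 0 ↔ C ⊓ dualCode F C = ⊥ := by
  subst hC
  have hinj : Function.Injective G.vecMul := vecMul_injective_iff.mpr
    (linearIndependent_row_of_rank_eq_card (by rwa [Fintype.card_fin]))
  rw [rowSpace_inf_dualCode_eq_bot_iff, Ne, ← exists_mulVec_eq_zero_iff]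
  have hvecMul_eq_zero : ∀ x, x ᵥ* G = 0 ↔ x = 0 := fun _ => hinj.eq_iff' (zero_vecMul G)
  simp only [hvecMul_eq_zero, ne_eq, not_exists, not_and, not_imp_not]

/-- Massey: `det (G Gᵀ) ≠ 0` iff the code generated by `G` is LCD. -/
theorem stmt1 (F : Type*) [Field F] [Fintype F] {n k : ℕ}
    (G : Matrix (Fin k) (Fin n) F) (hG : G.rank = k)
    (C : Submodule F (Fin n → F)) (hC : C = rowSpace F G) :
    (G * Gᵀ).det ≠ 0 ↔ C ⊓ dualCode F C = ⊥ :=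
  stmt1_general F G hG C hC
end

section
/- Let Π be an equitable partition with t equal-size cells of a d-class association scheme with quotient matrices M₀,...,M_d, reduced modulo a prime p. Suppose there is an index i with p | p_{i,i}^k for all k ∈ {0,...,d}. Then over F_q (q a power of p), the matrix N = [M_i | α I_t] generates an LCD code of length 2t and dimension t for every nonzero α ∈ F_q. -/
open Matrix

/-! In characteristic `p` the scheme relation `M_i² = ∑ₖ p_{ii}^k M_k` collapses to `M_i² = 0`,
so for symmetric `M_i` the generator `N = [M_i | α I]` satisfies `N Nᵀ = α² I`. Massey's criterion
then applies: if `G Gᵀ` is invertible, `G` has independent rows (`c Gᵀ G = 0 ⇒ c = 0`) and no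
nonzero codeword `c G` is orthogonal to every row of `G` (that would mean `G Gᵀ c = 0`). -/

section Massey

variable {F : Type*} [Field F] {κ ι : Type*}

theorem rowSpace_eq_range_vecMulLinear [Fintype κ] (G : Matrix κ ι F) :
    rowSpace F G = LinearMap.range G.vecMulLinear :=
  (range_vecMulLinear G).symm

theorem mulVec_eq_zero_of_mem_dualCode_rowSpace [Fintype ι] {G : Matrix κ ι F} {v : ι → F}
    (hv : v ∈ dualCode F (rowSpace F G)) : G *ᵥ v = 0 := by
  ext j
  rw [mulVec, dotProduct_comm]
  exact hv (G j) (Submodule.subset_span ⟨j, rfl⟩)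

variable [Fintype κ] [DecidableEq κ] [Fintype ι]

theorem rowSpace_inf_dualCode_eq_bot_of_isUnit {G : Matrix κ ι F} (hG : IsUnit (G * Gᵀ)) :
    rowSpace F G ⊓ dualCode F (rowSpace F G) = ⊥ := by
  rw [eq_bot_iff]
  rintro v ⟨hv, hv_dual⟩
  rw [rowSpace_eq_range_vecMulLinear] at hv
  obtain ⟨c, rfl⟩ := hv
  have hc : (G * Gᵀ) *ᵥ c = 0 := by
    rw [← mulVec_mulVec, mulVec_transpose]
    exact mulVec_eq_zero_of_mem_dualCode_rowSpace hv_dual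
  have hc0 : c = 0 := mulVec_injective_iff_isUnit.mpr hG (hc.trans (mulVec_zero _).symm)
  simp [hc0]

theorem finrank_rowSpace_of_isUnit {G : Matrix κ ι F} (hG : IsUnit (G * Gᵀ)) :
    Module.finrank F (rowSpace F G) = Fintype.card κ := by
  have hinj : Function.Injective G.vecMulLinear := fun c c' h => by
    apply vecMul_injective_iff_isUnit.mpr hG
    simp only [← vecMul_vecMul]
    exact congrArg (· ᵥ* Gᵀ) h
  rw [rowSpace_eq_range_vecMulLinear, LinearMap.finrank_range_of_inj hinj,
    Module.finrank_fintype_fun_eq_card]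

end Massey

theorem fromCols_mul_transpose_fromCols {R m n₁ n₂ : Type*} [CommSemiring R] [Fintype n₁]
    [Fintype n₂] (A : Matrix m n₁ R) (B : Matrix m n₂ R) :
    fromCols A B * (fromCols A B)ᵀ = A * Aᵀ + B * Bᵀ := by
  rw [transpose_fromCols, fromCols_mul_fromRows]

theorem isUnit_fromCols_smul_one_mul_transpose {F n : Type*} [Field F] [Fintype n]
    [DecidableEq n] {A : Matrix n n F} (hA : A * Aᵀ = 0) {α : F} (hα : α ≠ 0) :
    IsUnit (fromCols A (α • (1 : Matrix n n F)) * (fromCols A (α • (1 : Matrix n n F)))ᵀ) := by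
  rw [fromCols_mul_transpose_fromCols, hA, zero_add, transpose_smul, transpose_one,
    smul_mul_smul_comm, one_mul]
  exact isUnit_one.smul (Units.mk0 (α * α) (mul_ne_zero hα hα))

theorem sum_natCast_smul_eq_zero_of_dvd {R A ι : Type*} [Semiring R] [AddCommMonoid A]
    [Module R A] [Fintype ι] (p : ℕ) [CharP R p] (c : ι → ℕ) (y : ι → A)
    (hc : ∀ k, p ∣ c k) : ∑ k, (c k : R) • y k = 0 :=
  Finset.sum_eq_zero fun k _ => by rw [(CharP.cast_eq_zero_iff R p _).mpr (hc k), zero_smul]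

theorem stmt11_general (F : Type*) [Field F] {p : ℕ}
    [CharP F p] {d t : ℕ}
    (pnum : Fin (d + 1) → Fin (d + 1) → Fin (d + 1) → ℕ)
    (M : Fin (d + 1) → Matrix (Fin t) (Fin t) F)
    (hsym : ∀ a, (M a)ᵀ = M a)
    (hmul : ∀ a b, M a * M b = ∑ k, (pnum a b k : F) • M k)
    (i : Fin (d + 1)) (hdiv : ∀ k, p ∣ pnum i i k)
    (α : F) (hα : α ≠ 0) :
    rowSpace F (fromCols (M i) (α • (1 : Matrix (Fin t) (Fin t) F))) ⊓
        dualCode F (rowSpace F (fromCols (M i) (α • (1 : Matrix (Fin t) (Fin t) F)))) = ⊥ ∧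
      Module.finrank F ↥(rowSpace F (fromCols (M i) (α • (1 : Matrix (Fin t) (Fin t) F)))) = t := by
  have hsq : M i * M i = 0 := (hmul i i).trans (sum_natCast_smul_eq_zero_of_dvd p _ _ hdiv)
  have hunit := isUnit_fromCols_smul_one_mul_transpose (by rw [hsym, hsq]) hα
  exact ⟨rowSpace_inf_dualCode_eq_bot_of_isUnit hunit,
    (finrank_rowSpace_of_isUnit hunit).trans (Fintype.card_fin t)⟩

/-- If the quotient matrices mod `p` satisfy the scheme relations
and `p ∣ p_{i,i}^k` for all `k`, then `N = [M_i | α I]` generates an LCD code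
of length `2t` and dimension `t` over `F_q` for every `α ≠ 0`. -/
theorem stmt11 (F : Type*) [Field F] [Fintype F] {p : ℕ} (hp : p.Prime)
    [CharP F p] {d t : ℕ}
    (pnum : Fin (d + 1) → Fin (d + 1) → Fin (d + 1) → ℕ)
    (M : Fin (d + 1) → Matrix (Fin t) (Fin t) F)
    (hsym : ∀ a, (M a)ᵀ = M a)
    (hmul : ∀ a b, M a * M b = ∑ k, (pnum a b k : F) • M k)
    (i : Fin (d + 1)) (hdiv : ∀ k, p ∣ pnum i i k)
    (α : F) (hα : α ≠ 0) :
    rowSpace F (fromCols (M i) (α • (1 : Matrix (Fin t) (Fin t) F))) ⊓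
        dualCode F (rowSpace F (fromCols (M i) (α • (1 : Matrix (Fin t) (Fin t) F)))) = ⊥ ∧
      Module.finrank F ↥(rowSpace F (fromCols (M i) (α • (1 : Matrix (Fin t) (Fin t) F)))) = t :=
  stmt11_general F pnum M hsym hmul i hdiv α hα
end

section
/- Let N₁,...,N_s be t×(2t) matrices over F_q such that N_iN_jᵀ is nonsingular for all i,j (in particular each N_i has full row rank t). Then the set of row spaces {rowspace(N₁),...,rowspace(N_s)} is an LCD subspace code: for all i,j, rowspace(N_i) ∩ (rowspace(N_j))⊥ = {0}. Moreover all codewords have dimension t, so it is a constant-dimension subspace code in F_q^{2t} of dimension t. -/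
open Matrix

theorem rank_aux (F : Type*) [Field F] {t : ℕ} {m : Type*} [Fintype m]
    (A : Matrix (Fin t) m F) (hA : IsUnit (A * Aᵀ)) : A.rank = t := by
  classical
  have h1 : (A * Aᵀ).rank = t := by
    rw [Matrix.rank_of_isUnit _ hA, Fintype.card_fin]
  have h2 : (A * Aᵀ).rank ≤ A.rank := Matrix.rank_mul_le_left A Aᵀ
  have h3 : A.rank ≤ t := by
    simpa using Matrix.rank_le_card_height A
  omega

/-- If `N_i N_jᵀ` is nonsingular for all `i, j`, then the row
spaces of the `t × 2t` matrices `N_i` form an LCD subspace code in `F_q^{2t}`,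
all codewords having dimension `t`. -/
theorem stmt19 (F : Type*) [Field F] [Fintype F] {t s : ℕ}
    (N : Fin s → Matrix (Fin t) (Fin t ⊕ Fin t) F)
    (h : ∀ i j, IsUnit (N i * (N j)ᵀ)) :
    (∀ i j, rowSpace F (N i) ⊓ dualCode F (rowSpace F (N j)) = ⊥) ∧
      ∀ i, Module.finrank F ↥(rowSpace F (N i)) = t := by
  classical
  constructor
  · intro i j
    rw [eq_bot_iff]
    rintro v ⟨hv1, hv2⟩
    have hv1' : v ∈ LinearMap.range (N i).vecMulLinear := by
      rw [range_vecMulLinear]; exact hv1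
    obtain ⟨x, rfl⟩ := hv1'
    have hx : ∀ k, (N i).vecMulLinear x ⬝ᵥ (N j) k = 0 := fun k =>
      hv2 (N j k) (Submodule.subset_span ⟨k, rfl⟩)
    have key : x ᵥ* (N j * (N i)ᵀ)ᵀ = 0 := by
      funext k
      have := hx k
      simp only [Matrix.vecMulLinear_apply] at this
      simp only [Pi.zero_apply]
      rw [← this]
      simp only [Matrix.vecMul, dotProduct, Matrix.mul_apply, Matrix.transpose_apply,
        Pi.zero_apply, Finset.sum_mul, Finset.mul_sum]
      rw [Finset.sum_comm]
      apply Finset.sum_congr rfl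
      intro b _
      apply Finset.sum_congr rfl
      intro a _
      ring
    have hx0 : x = 0 := by
      have hu : IsUnit ((N j * (N i)ᵀ)ᵀ) := by
        rw [Matrix.isUnit_transpose]; exact h j i
      have := Matrix.vecMul_injective_iff_isUnit.2 hu (by simpa using key : x ᵥ* (N j * (N i)ᵀ)ᵀ = (0 : Fin t → F) ᵥ* (N j * (N i)ᵀ)ᵀ)
      exact this
    simp [hx0, Submodule.mem_bot, Matrix.vecMulLinear_apply]
  · intro i
    have := rank_aux F (N i) (h i i)
    rw [Matrix.rank_eq_finrank_span_row] at this
    unfold rowSpace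
    exact this
end
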